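/- arXiv:2305.06180 — 4 statements merged into one kernel-verified Lean document; each statement's English description precedes it below -/
import Mathlib

section
/- Let L > 0 and Δt > 0, let X, u : ℝ → ℝ² be continuously differentiable and L-periodic with ‖X'(s) + Δt·u'(s)‖ > 0 for every s, and let v : ℝ → ℝ² be continuously differentiable and L-periodic. Then the function ε ↦ ∫₀^L ‖X'(s) + Δt·u'(s) + ε·Δt·v'(s)‖ ds is differentiable at ε = 0, with derivative equal to Δt·∫₀^L ⟨v'(s), T(s)⟩ ds, where T(s) = (X'(s) + Δt·u'(s))/‖X'(s) + Δt·u'(s)‖. -/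
open MeasureTheory
open scoped RealInnerProductSpace

theorem HasDerivAt.norm {F : Type*} [NormedAddCommGroup F] [InnerProductSpace ℝ F]
    {g : ℝ → F} {g' : F} {x : ℝ} (hg : HasDerivAt g g' x) (h0 : g x ≠ 0) :
    HasDerivAt (fun t => ‖g t‖) ⟪g', ‖g x‖⁻¹ • g x⟫ x := by
  have hsqrt := hg.norm_sq.sqrt (pow_ne_zero 2 (norm_ne_zero_iff.mpr h0))
  simp only [Real.sqrt_sq (norm_nonneg _)] at hsqrt
  convert hsqrt using 1
  rw [real_inner_smul_right, real_inner_comm]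
  field_simp [norm_ne_zero_iff.mpr h0]

theorem lipschitzWith_norm_add_smul {E : Type*} [SeminormedAddCommGroup E] [NormedSpace ℝ E]
    (y w : E) : LipschitzWith (Real.nnabs ‖w‖) fun ε : ℝ => ‖y + ε • w‖ := by
  refine LipschitzWith.of_dist_le_mul fun ε δ => ?_
  calc dist ‖y + ε • w‖ ‖y + δ • w‖ ≤ ‖(y + ε • w) - (y + δ • w)‖ := dist_norm_norm_le _ _
    _ = ‖w‖ * dist ε δ := by
      rw [add_sub_add_left_eq_sub, ← sub_smul, norm_smul, Real.dist_eq, Real.norm_eq_abs, mul_comm]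
    _ = Real.nnabs ‖w‖ * dist ε δ := by rw [Real.coe_nnabs, abs_norm]

theorem hasDerivAt_intervalIntegral_norm_add_smul {E : Type*} [NormedAddCommGroup E]
    [InnerProductSpace ℝ E] {Y W : ℝ → E} {a b : ℝ}
    (hY : IntervalIntegrable Y volume a b) (hW : IntervalIntegrable W volume a b)
    (hY0 : ∀ᵐ s, s ∈ Set.uIoc a b → Y s ≠ 0) :
    HasDerivAt (fun ε : ℝ => ∫ s in a..b, ‖Y s + ε • W s‖)
      (∫ s in a..b, ⟪W s, ‖Y s‖⁻¹ • Y s⟫) 0 := by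
  -- The integrand is `‖W s‖`-Lipschitz in `ε`, so it suffices to differentiate it at `ε = 0`.
  have hYm := hY.def'.aestronglyMeasurable
  have hWm := hW.def'.aestronglyMeasurable
  refine (intervalIntegral.hasDerivAt_integral_of_dominated_loc_of_lip (bound := fun s => ‖W s‖)
    Filter.univ_mem ?_ ?_ ?_ ?_ hW.norm ?_).2
  · exact Filter.Eventually.of_forall fun ε => (hYm.add (hWm.const_smul ε)).norm
  · simpa using hY.norm
  · exact hWm.inner ((hYm.norm.aemeasurable.inv.aestronglyMeasurable).smul hYm)
  · exact Filter.Eventually.of_forall fun s _ =>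
      (lipschitzWith_norm_add_smul (Y s) (W s)).lipschitzOnWith
  · filter_upwards [hY0] with s hs hsab
    simpa using (((hasDerivAt_id (0 : ℝ)).smul_const (W s)).const_add (Y s)).norm
      (by simpa using hs hsab)

theorem stmt0_general
    (L Δt : ℝ)
    (X u v : ℝ → EuclideanSpace ℝ (Fin 2))
    (hX : ContDiff ℝ 1 X) (hu : ContDiff ℝ 1 u) (hv : ContDiff ℝ 1 v)
    (hpos : ∀ s, 0 < ‖deriv X s + Δt • deriv u s‖)
    (T : ℝ → EuclideanSpace ℝ (Fin 2))
    (hT : ∀ s, T s = ‖deriv X s + Δt • deriv u s‖⁻¹ • (deriv X s + Δt • deriv u s)) :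
    HasDerivAt
      (fun ε : ℝ => ∫ s in (0:ℝ)..L, ‖deriv X s + Δt • deriv u s + (ε * Δt) • deriv v s‖)
      (Δt * ∫ s in (0:ℝ)..L, ⟪deriv v s, T s⟫) 0 := by
  have hY : Continuous fun s => deriv X s + Δt • deriv u s :=
    (hX.continuous_deriv le_rfl).add ((hu.continuous_deriv le_rfl).const_smul Δt)
  have hvar := hasDerivAt_intervalIntegral_norm_add_smul (hY.intervalIntegrable 0 L)
    ((hv.continuous_deriv le_rfl).intervalIntegrable 0 L)
    (Filter.Eventually.of_forall fun s _ => norm_pos_iff.mp (hpos s))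
  have hrescaled := hvar.comp_of_eq (0 : ℝ) (hasDerivAt_mul_const Δt) (zero_mul Δt).symm
  simp only [← hT] at hrescaled
  rw [mul_comm]
  exact hrescaled

/-- First variation of the deformed perimeter (Lemma 3.1, eq. (eq:dPer 1)). -/
theorem stmt0
    (L Δt : ℝ) (hL : 0 < L) (hΔt : 0 < Δt)
    (X u v : ℝ → EuclideanSpace ℝ (Fin 2))
    (hX : ContDiff ℝ 1 X) (hu : ContDiff ℝ 1 u) (hv : ContDiff ℝ 1 v)
    (hXper : Function.Periodic X L) (huper : Function.Periodic u L)
    (hvper : Function.Periodic v L)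
    (hpos : ∀ s, 0 < ‖deriv X s + Δt • deriv u s‖)
    (T : ℝ → EuclideanSpace ℝ (Fin 2))
    (hT : ∀ s, T s = ‖deriv X s + Δt • deriv u s‖⁻¹ • (deriv X s + Δt • deriv u s)) :
    HasDerivAt
      (fun ε : ℝ => ∫ s in (0:ℝ)..L, ‖deriv X s + Δt • deriv u s + (ε * Δt) • deriv v s‖)
      (Δt * ∫ s in (0:ℝ)..L, ⟪deriv v s, T s⟫) 0 :=
  stmt0_general L Δt X u v hX hu hv hpos T hT
end

section
/- Let L > 0 and Δt > 0, let X, u : ℝ → ℝ² be twice continuously differentiable and L-periodic with ‖X'(s) + Δt·u'(s)‖ > 0 for every s, and let v : ℝ → ℝ² be continuously differentiable and L-periodic. Set T(s) = (X'(s) + Δt·u'(s))/‖X'(s) + Δt·u'(s)‖ and H̃(s) = −T'(s). Then the derivative at ε = 0 of ε ↦ ∫₀^L ‖X'(s) + Δt·u'(s) + ε·Δt·v'(s)‖ ds equals Δt·∫₀^L ⟨v(s), H̃(s)⟩ ds. -/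
open MeasureTheory Filter Set
open scoped RealInnerProductSpace Topology

/-!
Differentiating under the integral sign, the first variation of `∫ ‖Y + ε W‖` at `ε = 0` is
`∫ ⟪Y / ‖Y‖, W⟫`. This is legitimate because `Y + ε W` stays away from `0` for small `ε`
(compactness of the parameter interval), and the `ε`-derivative, an inner product of `W` with a
unit vector, is dominated by `‖W‖`. With `W = Δt v'`, an integration by parts, whose boundary
term cancels by periodicity, turns `⟪v', T⟫` into `⟪v, -T'⟫ = ⟪v, H̃⟫`.
-/

theorem Function.Periodic.deriv {𝕜 F : Type*} [NontriviallyNormedField 𝕜] [NormedAddCommGroup F]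
    [NormedSpace 𝕜 F] {f : 𝕜 → F} {L : 𝕜} (hf : Function.Periodic f L) :
    Function.Periodic (deriv f) L := fun s => by
  rw [← deriv_comp_add_const, hf.funext]

theorem IsCompact.eventually_forall_add_smul_ne_zero {α F : Type*} [TopologicalSpace α]
    [NormedAddCommGroup F] [NormedSpace ℝ F] {Y W : α → F} {K : Set α}
    (hK : IsCompact K) (hY : Continuous Y) (hW : Continuous W) (hY0 : ∀ s ∈ K, Y s ≠ 0) :
    ∀ᶠ ε in 𝓝 (0 : ℝ), ∀ s ∈ K, Y s + ε • W s ≠ 0 := by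
  refine hK.eventually_forall_of_forall_eventually fun s hs => ?_
  have hcont : Continuous fun p : ℝ × α => Y p.2 + p.1 • W p.2 := by fun_prop
  exact hcont.continuousAt.eventually_ne (by simpa using hY0 s hs)

variable {E : Type*} [NormedAddCommGroup E] [InnerProductSpace ℝ E]

theorem HasDerivAt.norm_of_ne_zero {f : ℝ → E} {f' : E} {x : ℝ} (hf : HasDerivAt f f' x)
    (h0 : f x ≠ 0) : HasDerivAt (‖f ·‖) ⟪‖f x‖⁻¹ • f x, f'⟫ x := by
  have hnorm : ‖f x‖ ≠ 0 := norm_ne_zero_iff.mpr h0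
  have h := hf.norm_sq.sqrt (pow_ne_zero 2 hnorm)
  simp only [Real.sqrt_sq (norm_nonneg _)] at h
  convert h using 1
  rw [real_inner_smul_left]
  field_simp

theorem hasDerivAt_integral_norm_add_smul {Y W : ℝ → E} {a b : ℝ} (hY : Continuous Y)
    (hW : Continuous W) (hY0 : ∀ s ∈ uIcc a b, Y s ≠ 0) :
    HasDerivAt (fun ε : ℝ => ∫ s in a..b, ‖Y s + ε • W s‖)
      (∫ s in a..b, ⟪‖Y s‖⁻¹ • Y s, W s⟫) 0 := by
  set F' : ℝ → ℝ → ℝ := fun ε s => ⟪‖Y s + ε • W s‖⁻¹ • (Y s + ε • W s), W s⟫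
  have hnear := isCompact_uIcc.eventually_forall_add_smul_ne_zero hY hW hY0
  have hcont : ∀ ε : ℝ, Continuous fun s => ‖Y s + ε • W s‖ := fun ε => by fun_prop
  have hbound : ∀ s ∈ uIcc a b, ∀ ε ∈ {ε : ℝ | ∀ s ∈ uIcc a b, Y s + ε • W s ≠ 0},
      ‖F' ε s‖ ≤ ‖W s‖ := fun s hs ε hε => by
    calc ‖F' ε s‖ ≤ ‖‖Y s + ε • W s‖⁻¹ • (Y s + ε • W s)‖ * ‖W s‖ := norm_inner_le_norm _ _
      _ = ‖W s‖ := by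
        rw [norm_smul, norm_inv, norm_norm, inv_mul_cancel₀ (norm_ne_zero_iff.mpr (hε s hs)),
          one_mul]
  have h := intervalIntegral.hasDerivAt_integral_of_dominated_loc_of_deriv_le (μ := volume)
    (F := fun ε s => ‖Y s + ε • W s‖) (F' := F') hnear
    (Eventually.of_forall fun ε => (hcont ε).aestronglyMeasurable)
    ((hcont 0).intervalIntegrable a b)
    (by
      have : ContinuousOn (F' 0) (uIoc a b) := by
        simp only [F', zero_smul, add_zero]
        exact ((hY.norm.continuousOn.inv₀ fun s hs => norm_ne_zero_iff.mpr
          (hY0 s (uIoc_subset_uIcc hs))).smul hY.continuousOn).inner hW.continuousOn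
      exact this.aestronglyMeasurable measurableSet_uIoc)
    (Eventually.of_forall fun s hs => hbound s (uIoc_subset_uIcc hs))
    (hW.norm.intervalIntegrable a b)
    (Eventually.of_forall fun s hs ε hε =>
      (((hasDerivAt_id ε).smul_const (W s)).const_add (Y s)).norm_of_ne_zero
        (by simpa using hε s (uIoc_subset_uIcc hs)) |>.congr_deriv (by simp [F']))
  simpa [F'] using h.2

theorem intervalIntegral.integral_inner_deriv_eq_neg {v T : ℝ → E} {a b : ℝ}
    (hv : ContDiff ℝ 1 v) (hT : ContDiff ℝ 1 T) (hva : v b = v a) (hTa : T b = T a) :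
    ∫ s in a..b, ⟪deriv v s, T s⟫ = -∫ s in a..b, ⟪v s, deriv T s⟫ := by
  have hv' := hv.continuous_deriv le_rfl
  have hT' := hT.continuous_deriv le_rfl
  have hFTC : ∫ s in a..b, (⟪v s, deriv T s⟫ + ⟪deriv v s, T s⟫) = 0 := by
    rw [intervalIntegral.integral_eq_sub_of_hasDerivAt
      (fun s _ => ((hv.differentiable one_ne_zero s).hasDerivAt).inner ℝ
        (hT.differentiable one_ne_zero s).hasDerivAt)
      (((hv.continuous.inner hT').add (hv'.inner hT.continuous)).intervalIntegrable a b),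
      hva, hTa, sub_self]
  rw [intervalIntegral.integral_add ((hv.continuous.inner hT').intervalIntegrable a b)
    ((hv'.inner hT.continuous).intervalIntegrable a b)] at hFTC
  linarith

theorem stmt1_general
    (L Δt : ℝ)
    (X u v : ℝ → EuclideanSpace ℝ (Fin 2))
    (hX : ContDiff ℝ 2 X) (hu : ContDiff ℝ 2 u) (hv : ContDiff ℝ 1 v)
    (hXper : Function.Periodic X L) (huper : Function.Periodic u L)
    (hvper : Function.Periodic v L)
    (hpos : ∀ s, 0 < ‖deriv X s + Δt • deriv u s‖)
    (T Htilde : ℝ → EuclideanSpace ℝ (Fin 2))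
    (hT : ∀ s, T s = ‖deriv X s + Δt • deriv u s‖⁻¹ • (deriv X s + Δt • deriv u s))
    (hH : ∀ s, Htilde s = -deriv T s) :
    HasDerivAt
      (fun ε : ℝ => ∫ s in (0:ℝ)..L, ‖deriv X s + Δt • deriv u s + (ε * Δt) • deriv v s‖)
      (Δt * ∫ s in (0:ℝ)..L, ⟪v s, Htilde s⟫) 0 := by
  set Y : ℝ → EuclideanSpace ℝ (Fin 2) := fun s => deriv X s + Δt • deriv u s
  have hY : ContDiff ℝ 1 Y := hX.deriv'.add (hu.deriv'.const_smul Δt)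
  have hY0 : ∀ s, Y s ≠ 0 := fun s => norm_pos_iff.mp (hpos s)
  have hTY : T = fun s => ‖Y s‖⁻¹ • Y s := funext hT
  have hT1 : ContDiff ℝ 1 T :=
    hTY ▸ ((hY.norm ℝ hY0).inv fun s => norm_ne_zero_iff.mpr (hY0 s)).smul hY
  have hYper : Y L = Y 0 := by
    simpa [Y] using congrArg₂ (· + Δt • ·) (hXper.deriv 0) (huper.deriv 0)
  have hvar := hasDerivAt_integral_norm_add_smul (a := 0) (b := L) hY.continuous
    ((hv.continuous_deriv le_rfl).const_smul Δt) fun s _ => hY0 s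
  convert hvar using 1
  · simp only [Y, mul_smul, Pi.smul_apply]
  · calc Δt * ∫ s in (0:ℝ)..L, ⟪v s, Htilde s⟫
        = Δt * ∫ s in (0:ℝ)..L, ⟪deriv v s, T s⟫ := by
          rw [intervalIntegral.integral_inner_deriv_eq_neg hv hT1 (by simpa using hvper 0)
            (by simp only [hTY, hYper]), ← intervalIntegral.integral_neg]
          simp only [hH, inner_neg_right]
      _ = ∫ s in (0:ℝ)..L, ⟪‖Y s‖⁻¹ • Y s, Δt • deriv v s⟫ := by
          rw [← intervalIntegral.integral_const_mul]
          simp only [hTY, inner_smul_right, real_inner_comm]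

/-- First variation of the deformed perimeter expressed through the pulled-back
curvature vector (Lemma 3.1 of the paper). -/
theorem stmt1
    (L Δt : ℝ) (hL : 0 < L) (hΔt : 0 < Δt)
    (X u v : ℝ → EuclideanSpace ℝ (Fin 2))
    (hX : ContDiff ℝ 2 X) (hu : ContDiff ℝ 2 u) (hv : ContDiff ℝ 1 v)
    (hXper : Function.Periodic X L) (huper : Function.Periodic u L)
    (hvper : Function.Periodic v L)
    (hpos : ∀ s, 0 < ‖deriv X s + Δt • deriv u s‖)
    (T Htilde : ℝ → EuclideanSpace ℝ (Fin 2))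
    (hT : ∀ s, T s = ‖deriv X s + Δt • deriv u s‖⁻¹ • (deriv X s + Δt • deriv u s))
    (hH : ∀ s, Htilde s = -deriv T s) :
    HasDerivAt
      (fun ε : ℝ => ∫ s in (0:ℝ)..L, ‖deriv X s + Δt • deriv u s + (ε * Δt) • deriv v s‖)
      (Δt * ∫ s in (0:ℝ)..L, ⟪v s, Htilde s⟫) 0 :=
  stmt1_general L Δt X u v hX hu hv hXper huper hvper hpos T Htilde hT hH
end

section
/- Let L > 0 and Δt > 0, let X, u : ℝ → ℝ² be continuously differentiable and L-periodic with ‖X'(s) + Δt·u'(s)‖ > 0 for every s, and let v : ℝ → ℝ² be continuously differentiable and L-periodic. Then the function g(ε) = ∫₀^L ‖X'(s) + Δt·u'(s) + ε·Δt·v'(s)‖ ds is twice differentiable at ε = 0, and g''(0) = Δt²·∫₀^L (‖v'(s)‖² − ⟨v'(s), T(s)⟩²)/‖X'(s) + Δt·u'(s)‖ ds, where T(s) = (X'(s) + Δt·u'(s))/‖X'(s) + Δt·u'(s)‖. -/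
/-!
Differentiate twice under the integral sign. Near `x = 0` the vector `A s + x • B s` stays away
from `0` uniformly in `s ∈ [[a, b]]` (tube lemma), so both `x`-derivatives of `‖A s + x • B s‖`,
namely `⟪A + x B, B⟫ / ‖A + x B‖` and `(‖B‖² ‖A + x B‖² - ⟪A + x B, B⟫²) / ‖A + x B‖³`, are jointly
continuous, hence bounded on a compact neighbourhood, which is the domination needed. With
`A = X' + Δt u'`, `B = Δt v'` and `T = A / ‖A‖`, the second one at `x = 0` is
`Δt² (‖v'‖² - ⟪v', T⟫²) / ‖A‖`.
-/

open MeasureTheory Set Filter Topology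
open scoped RealInnerProductSpace Interval

theorem intervalIntegral.hasDerivAt_integral_of_continuousOn {𝕜 E : Type*} [RCLike 𝕜]
    [NormedAddCommGroup E] [NormedSpace ℝ E] [NormedSpace 𝕜 E]
    {F F' : 𝕜 → ℝ → E} {U : Set 𝕜} {a b : ℝ} {x₀ : 𝕜} (hU : IsCompact U) (hx₀ : U ∈ 𝓝 x₀)
    (hF : ∀ x ∈ U, ContinuousOn (F x) [[a, b]])
    (hF' : ContinuousOn (fun p : 𝕜 × ℝ => F' p.1 p.2) (U ×ˢ [[a, b]]))
    (hderiv : ∀ x ∈ U, ∀ s ∈ [[a, b]], HasDerivAt (F · s) (F' x s) x) :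
    HasDerivAt (fun x => ∫ s in a..b, F x s) (∫ s in a..b, F' x₀ s) x₀ := by
  obtain ⟨C, hC⟩ := (hU.prod isCompact_uIcc).exists_bound_of_continuousOn hF'
  have hF'₀ : ContinuousOn (F' x₀) [[a, b]] :=
    hF'.comp (Continuous.prodMk_right x₀).continuousOn
      fun s hs => mk_mem_prod (mem_of_mem_nhds hx₀) hs
  refine (intervalIntegral.hasDerivAt_integral_of_dominated_loc_of_deriv_le (bound := fun _ => C)
    hx₀ ?_ ((hF x₀ (mem_of_mem_nhds hx₀)).intervalIntegrable)
    ((hF'₀.mono uIoc_subset_uIcc).aestronglyMeasurable measurableSet_uIoc)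
    (ae_of_all _ fun s hs x hx => hC (x, s) ⟨hx, uIoc_subset_uIcc hs⟩)
    intervalIntegrable_const
    (ae_of_all _ fun s hs x hx => hderiv x hx s (uIoc_subset_uIcc hs))).2
  filter_upwards [hx₀] with x hx
  exact ((hF x hx).mono uIoc_subset_uIcc).aestronglyMeasurable measurableSet_uIoc

section NormAddSmul

variable {E : Type*} [NormedAddCommGroup E] [InnerProductSpace ℝ E]

theorem HasDerivAt.norm_s3 {f : ℝ → E} {f' : E} {x : ℝ} (hf : HasDerivAt f f' x) (h0 : f x ≠ 0) :
    HasDerivAt (fun t => ‖f t‖) (⟪f x, f'⟫ / ‖f x‖) x := by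
  have hpos : 0 < ‖f x‖ := norm_pos_iff.2 h0
  convert hf.norm_sq.sqrt (by positivity) using 1
  · simp only [Real.sqrt_sq (norm_nonneg _)]
  · rw [Real.sqrt_sq (norm_nonneg _)]
    field_simp

theorem hasDerivAt_inner_div_norm_add_smul {a b : E} {x : ℝ} (h0 : a + x • b ≠ 0) :
    HasDerivAt (fun t : ℝ => ⟪a + t • b, b⟫ / ‖a + t • b‖)
      ((‖b‖ ^ 2 * ‖a + x • b‖ ^ 2 - ⟪a + x • b, b⟫ ^ 2) / ‖a + x • b‖ ^ 3) x := by
  have hline : HasDerivAt (fun t : ℝ => a + t • b) b x := by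
    simpa using ((hasDerivAt_id x).smul_const b).const_add a
  have hnorm : ‖a + x • b‖ ≠ 0 := norm_ne_zero_iff.2 h0
  refine ((hline.inner ℝ (hasDerivAt_const x b)).div (hline.norm_s3 h0) hnorm).congr_deriv ?_
  rw [inner_zero_right, zero_add, real_inner_self_eq_norm_sq]
  field_simp

variable {A B : ℝ → E} {a b : ℝ} {U : Set ℝ} {x : ℝ}

theorem hasDerivAt_integral_norm_add_smul_s3 (hA : Continuous A) (hB : Continuous B)
    (hU : IsCompact U) (hne : ∀ t ∈ U, ∀ s ∈ [[a, b]], A s + t • B s ≠ 0) (hx : U ∈ 𝓝 x) :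
    HasDerivAt (fun t : ℝ => ∫ s in a..b, ‖A s + t • B s‖)
      (∫ s in a..b, ⟪A s + x • B s, B s⟫ / ‖A s + x • B s‖) x := by
  apply intervalIntegral.hasDerivAt_integral_of_continuousOn hU hx
  · intro t _
    fun_prop
  · exact ContinuousOn.div (by fun_prop) (by fun_prop)
      fun p hp => norm_ne_zero_iff.2 (hne p.1 hp.1 p.2 hp.2)
  · intro t ht s hs
    simpa using (((hasDerivAt_id t).smul_const (B s)).const_add (A s)).norm_s3 (hne t ht s hs)

theorem hasDerivAt_integral_inner_div_norm_add_smul (hA : Continuous A) (hB : Continuous B)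
    (hU : IsCompact U) (hne : ∀ t ∈ U, ∀ s ∈ [[a, b]], A s + t • B s ≠ 0) (hx : U ∈ 𝓝 x) :
    HasDerivAt (fun t : ℝ => ∫ s in a..b, ⟪A s + t • B s, B s⟫ / ‖A s + t • B s‖)
      (∫ s in a..b, (‖B s‖ ^ 2 * ‖A s + x • B s‖ ^ 2 - ⟪A s + x • B s, B s⟫ ^ 2) /
        ‖A s + x • B s‖ ^ 3) x := by
  apply intervalIntegral.hasDerivAt_integral_of_continuousOn hU hx
  · intro t ht
    exact ContinuousOn.div (by fun_prop) (by fun_prop)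
      fun s hs => norm_ne_zero_iff.2 (hne t ht s hs)
  · exact ContinuousOn.div (by fun_prop) (by fun_prop)
      fun p hp => pow_ne_zero 3 (norm_ne_zero_iff.2 (hne p.1 hp.1 p.2 hp.2))
  · intro t ht s hs
    exact hasDerivAt_inner_div_norm_add_smul (hne t ht s hs)

theorem hasDerivAt_deriv_integral_norm_add_smul (hA : Continuous A) (hB : Continuous B)
    (hA₀ : ∀ s ∈ [[a, b]], A s ≠ 0) :
    (∀ᶠ x in 𝓝 (0 : ℝ), DifferentiableAt ℝ (fun t : ℝ => ∫ s in a..b, ‖A s + t • B s‖) x) ∧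
      HasDerivAt (deriv fun t : ℝ => ∫ s in a..b, ‖A s + t • B s‖)
        (∫ s in a..b, (‖B s‖ ^ 2 * ‖A s‖ ^ 2 - ⟪A s, B s⟫ ^ 2) / ‖A s‖ ^ 3) 0 := by
  have hev : ∀ᶠ t in 𝓝 (0 : ℝ), ∀ s ∈ [[a, b]], A s + t • B s ≠ 0 :=
    isCompact_uIcc.eventually_forall_of_forall_eventually fun s hs =>
      have hcont : Continuous fun p : ℝ × ℝ => A p.2 + p.1 • B p.2 := by fun_prop
      hcont.continuousAt.eventually_ne (by simpa using hA₀ s hs)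
  obtain ⟨U, hU₀, hUsub, hU⟩ := local_compact_nhds hev
  have hfirst := (eventually_mem_nhds_iff.2 hU₀).mono fun x hx =>
    hasDerivAt_integral_norm_add_smul_s3 hA hB hU (fun t ht => hUsub ht) hx
  refine ⟨hfirst.mono fun x hx => hx.differentiableAt, ?_⟩
  simpa using (hasDerivAt_integral_inner_div_norm_add_smul hA hB hU (fun t ht => hUsub ht)
    hU₀).congr_of_eventuallyEq (hfirst.mono fun x hx => hx.deriv)

end NormAddSmul

theorem stmt3_general
    (L Δt : ℝ)
    (X u v : ℝ → EuclideanSpace ℝ (Fin 2))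
    (hX : ContDiff ℝ 1 X) (hu : ContDiff ℝ 1 u) (hv : ContDiff ℝ 1 v)
    (hpos : ∀ s, 0 < ‖deriv X s + Δt • deriv u s‖)
    (T : ℝ → EuclideanSpace ℝ (Fin 2))
    (hT : ∀ s, T s = ‖deriv X s + Δt • deriv u s‖⁻¹ • (deriv X s + Δt • deriv u s)) :
    (∀ᶠ ε in nhds (0:ℝ), DifferentiableAt ℝ
      (fun ε : ℝ => ∫ s in (0:ℝ)..L, ‖deriv X s + Δt • deriv u s + (ε * Δt) • deriv v s‖) ε) ∧
    HasDerivAt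
      (deriv (fun ε : ℝ =>
        ∫ s in (0:ℝ)..L, ‖deriv X s + Δt • deriv u s + (ε * Δt) • deriv v s‖))
      (Δt^2 * ∫ s in (0:ℝ)..L,
        (‖deriv v s‖^2 - (⟪deriv v s, T s⟫)^2) / ‖deriv X s + Δt • deriv u s‖) 0 := by
  have hA : Continuous fun s => deriv X s + Δt • deriv u s :=
    (hX.continuous_deriv le_rfl).add ((hu.continuous_deriv le_rfl).const_smul Δt)
  have hB : Continuous fun s => Δt • deriv v s := (hv.continuous_deriv le_rfl).const_smul Δt
  simp only [mul_smul]
  have hA₀ : ∀ s ∈ [[(0 : ℝ), L]], deriv X s + Δt • deriv u s ≠ 0 :=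
    fun s _ => norm_pos_iff.1 (hpos s)
  refine (hasDerivAt_deriv_integral_norm_add_smul hA hB hA₀).imp_right fun h => h.congr_deriv ?_
  rw [← intervalIntegral.integral_const_mul]
  refine intervalIntegral.integral_congr fun s _ => ?_
  have hnorm := (hpos s).ne'
  simp only [hT, norm_smul, real_inner_smul_right, mul_pow, Real.norm_eq_abs, sq_abs,
    real_inner_comm]
  field_simp

/-- Second variation of the deformed perimeter (eq. (eq:F(u) 2nd order)). -/
theorem stmt3
    (L Δt : ℝ) (hL : 0 < L) (hΔt : 0 < Δt)
    (X u v : ℝ → EuclideanSpace ℝ (Fin 2))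
    (hX : ContDiff ℝ 1 X) (hu : ContDiff ℝ 1 u) (hv : ContDiff ℝ 1 v)
    (hXper : Function.Periodic X L) (huper : Function.Periodic u L)
    (hvper : Function.Periodic v L)
    (hpos : ∀ s, 0 < ‖deriv X s + Δt • deriv u s‖)
    (T : ℝ → EuclideanSpace ℝ (Fin 2))
    (hT : ∀ s, T s = ‖deriv X s + Δt • deriv u s‖⁻¹ • (deriv X s + Δt • deriv u s)) :
    (∀ᶠ ε in nhds (0:ℝ), DifferentiableAt ℝ
      (fun ε : ℝ => ∫ s in (0:ℝ)..L, ‖deriv X s + Δt • deriv u s + (ε * Δt) • deriv v s‖) ε) ∧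
    HasDerivAt
      (deriv (fun ε : ℝ =>
        ∫ s in (0:ℝ)..L, ‖deriv X s + Δt • deriv u s + (ε * Δt) • deriv v s‖))
      (Δt^2 * ∫ s in (0:ℝ)..L,
        (‖deriv v s‖^2 - (⟪deriv v s, T s⟫)^2) / ‖deriv X s + Δt • deriv u s‖) 0 :=
  stmt3_general L Δt X u v hX hu hv hpos T hT
end

section
/- Let L > 0 and Δt > 0, let X, u : ℝ → ℝ² be continuously differentiable and L-periodic with ‖X'(s) + Δt·u'(s)‖ > 0 for every s, and let δu : ℝ → ℝ² be continuously differentiable. Then ∫₀^L ‖X'(s) + Δt·(u + δu)'(s)‖ ds ≤ ∫₀^L ‖X'(s) + Δt·u'(s)‖ ds + Δt·∫₀^L ⟨δu'(s), T(s)⟩ ds + (Δt²/2)·∫₀^L ‖δu'(s)‖²/‖X'(s) + Δt·u'(s)‖ ds, where T(s) = (X'(s) + Δt·u'(s))/‖X'(s) + Δt·u'(s)‖. -/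
open MeasureTheory
open scoped RealInnerProductSpace

/- Pointwise, AM–GM gives `‖a + b‖ ≤ (‖a + b‖² + ‖a‖²) / (2‖a‖)` for `a ≠ 0`, and expanding
`‖a + b‖² = ‖a‖² + 2⟪a, b⟫ + ‖b‖²` turns the right side into the second-order expansion of the
norm at `a`, with the Hessian replaced by its bound `1 / ‖a‖`. Integrate over `[0, L]`. -/

theorem le_sq_add_sq_div_two_mul {r : ℝ} (hr : 0 < r) (x : ℝ) :
    x ≤ (x ^ 2 + r ^ 2) / (2 * r) := by
  rw [le_div_iff₀ (by positivity)]
  nlinarith [sq_nonneg (x - r)]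

section Pointwise

variable {E : Type*} [NormedAddCommGroup E] [InnerProductSpace ℝ E]

theorem norm_add_le_norm_add_inner_add_sq_div {a : E} (ha : a ≠ 0) (b : E) :
    ‖a + b‖ ≤ ‖a‖ + ⟪b, ‖a‖⁻¹ • a⟫ + ‖b‖ ^ 2 / (2 * ‖a‖) := by
  have h : 0 < ‖a‖ := norm_pos_iff.mpr ha
  calc ‖a + b‖ ≤ (‖a + b‖ ^ 2 + ‖a‖ ^ 2) / (2 * ‖a‖) := le_sq_add_sq_div_two_mul h _
    _ = ‖a‖ + ⟪b, ‖a‖⁻¹ • a⟫ + ‖b‖ ^ 2 / (2 * ‖a‖) := by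
      rw [norm_add_sq_real, real_inner_smul_right, real_inner_comm]
      field_simp
      ring

theorem norm_add_smul_le {a : E} (ha : a ≠ 0) (t : ℝ) (v : E) :
    ‖a + t • v‖ ≤ ‖a‖ + t * ⟪v, ‖a‖⁻¹ • a⟫ + t ^ 2 / 2 * (‖v‖ ^ 2 / ‖a‖) := by
  have h := norm_add_le_norm_add_inner_add_sq_div ha (t • v)
  rw [real_inner_smul_left, norm_smul, mul_pow, Real.norm_eq_abs, sq_abs] at h
  calc ‖a + t • v‖ ≤ _ := h
    _ = _ := by ring

end Pointwise

theorem intervalIntegral_norm_add_smul_le {E : Type*} [NormedAddCommGroup E]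
    [InnerProductSpace ℝ E] {s₀ s₁ : ℝ} (hs : s₀ ≤ s₁) {a v : ℝ → E} (ha : Continuous a)
    (hv : Continuous v) (ha0 : ∀ s, a s ≠ 0) (t : ℝ) :
    ∫ s in s₀..s₁, ‖a s + t • v s‖
      ≤ (∫ s in s₀..s₁, ‖a s‖) + t * (∫ s in s₀..s₁, ⟪v s, ‖a s‖⁻¹ • a s⟫)
        + t ^ 2 / 2 * ∫ s in s₀..s₁, ‖v s‖ ^ 2 / ‖a s‖ := by
  have hna : ∀ s, ‖a s‖ ≠ 0 := fun s => norm_ne_zero_iff.mpr (ha0 s)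
  have hinner : Continuous fun s => t * ⟪v s, ‖a s‖⁻¹ • a s⟫ :=
    continuous_const.mul (hv.inner ((ha.norm.inv₀ hna).smul ha))
  have hquot : Continuous fun s => t ^ 2 / 2 * (‖v s‖ ^ 2 / ‖a s‖) :=
    continuous_const.mul ((hv.norm.pow 2).div ha.norm hna)
  have hlin : Continuous fun s => ‖a s‖ + t * ⟪v s, ‖a s‖⁻¹ • a s⟫ := ha.norm.add hinner
  rw [← intervalIntegral.integral_const_mul, ← intervalIntegral.integral_const_mul,
    ← intervalIntegral.integral_add (ha.norm.intervalIntegrable _ _)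
      (hinner.intervalIntegrable _ _),
    ← intervalIntegral.integral_add (hlin.intervalIntegrable _ _)
      (hquot.intervalIntegrable _ _)]
  exact intervalIntegral.integral_mono_on hs
    ((ha.add (hv.const_smul t)).norm.intervalIntegrable _ _)
    ((hlin.add hquot).intervalIntegrable _ _)
    fun s _ => norm_add_smul_le (ha0 s) t (v s)

theorem stmt5_general
    (L Δt : ℝ) (hL : 0 < L)
    (X u δu : ℝ → EuclideanSpace ℝ (Fin 2))
    (hX : ContDiff ℝ 1 X) (hu : ContDiff ℝ 1 u) (hδu : ContDiff ℝ 1 δu)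
    (hpos : ∀ s, 0 < ‖deriv X s + Δt • deriv u s‖)
    (T : ℝ → EuclideanSpace ℝ (Fin 2))
    (hT : ∀ s, T s = ‖deriv X s + Δt • deriv u s‖⁻¹ • (deriv X s + Δt • deriv u s)) :
    ∫ s in (0:ℝ)..L, ‖deriv X s + Δt • deriv (u + δu) s‖
      ≤ (∫ s in (0:ℝ)..L, ‖deriv X s + Δt • deriv u s‖)
        + Δt * (∫ s in (0:ℝ)..L, ⟪deriv δu s, T s⟫)
        + (Δt^2 / 2) *
          ∫ s in (0:ℝ)..L, ‖deriv δu s‖^2 / ‖deriv X s + Δt • deriv u s‖ := by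
  have hderiv : ∀ s, deriv X s + Δt • deriv (u + δu) s
      = (deriv X s + Δt • deriv u s) + Δt • deriv δu s := fun s => by
    rw [deriv_add (hu.differentiable one_ne_zero s) (hδu.differentiable one_ne_zero s),
      smul_add, add_assoc]
  simp only [hderiv, hT]
  exact intervalIntegral_norm_add_smul_le hL.le
    ((hX.continuous_deriv le_rfl).add ((hu.continuous_deriv le_rfl).const_smul Δt))
    (hδu.continuous_deriv le_rfl) (fun s => norm_pos_iff.mp (hpos s)) Δt

/-- Coercive upper bound on the deformed perimeter (eq. (eq:F(u) 2nd order_2)). -/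
theorem stmt5
    (L Δt : ℝ) (hL : 0 < L) (hΔt : 0 < Δt)
    (X u δu : ℝ → EuclideanSpace ℝ (Fin 2))
    (hX : ContDiff ℝ 1 X) (hu : ContDiff ℝ 1 u) (hδu : ContDiff ℝ 1 δu)
    (hXper : Function.Periodic X L) (huper : Function.Periodic u L)
    (hpos : ∀ s, 0 < ‖deriv X s + Δt • deriv u s‖)
    (T : ℝ → EuclideanSpace ℝ (Fin 2))
    (hT : ∀ s, T s = ‖deriv X s + Δt • deriv u s‖⁻¹ • (deriv X s + Δt • deriv u s)) :
    ∫ s in (0:ℝ)..L, ‖deriv X s + Δt • deriv (u + δu) s‖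
      ≤ (∫ s in (0:ℝ)..L, ‖deriv X s + Δt • deriv u s‖)
        + Δt * (∫ s in (0:ℝ)..L, ⟪deriv δu s, T s⟫)
        + (Δt^2 / 2) *
          ∫ s in (0:ℝ)..L, ‖deriv δu s‖^2 / ‖deriv X s + Δt • deriv u s‖ :=
  stmt5_general L Δt hL X u δu hX hu hδu hpos T hT
end
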